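/- Let q be a prime power, F = F_q the finite field with q elements, n ≥ 1, and λ ∈ F. Then the number of matrices A ∈ F^{n×n} with C_F(A,λ) ≠ {0} is at least q^{n²−1}; equivalently, the probability that a uniformly distributed A ∈ F^{n×n} satisfies C_F(A,λ) ≠ {0} is at least q⁻¹. -/

import Mathlib

open Matrix Module

/-- The twisted centralizer code `C_F(A,λ) = {B | A*B - λ*B*A = 0}`. -/
noncomputable def twistedCentralizer {F : Type*} [Field F] {m : Type*} [Fintype m] [DecidableEq m]
    (A : Matrix m m F) (lam : F) : Submodule F (Matrix m m F) :=
  LinearMap.ker (LinearMap.mulLeft F A - lam • LinearMap.mulRight F A)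

/-!
A singular `A` has nonzero vectors `v`, `w` with `A v = 0` and `wᵀ A = 0`, and then `B = v wᵀ ≠ 0`
satisfies `A B = B A = 0`, so `B ∈ C_F(A, λ)` for every `λ`. It remains to count singular matrices:
`|GL_n(F_q)| = ∏_{i<n} (q^n - q^i) ≤ q^{n(n-1)} (q^n - q^{n-1}) = q^{n²} - q^{n²-1}`.
-/

section

variable {F : Type*} [Field F] {m : Type*} [Fintype m] [DecidableEq m]

theorem mem_twistedCentralizer_iff {A B : Matrix m m F} {lam : F} :
    B ∈ twistedCentralizer A lam ↔ A * B = lam • (B * A) := by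
  simp [twistedCentralizer, sub_eq_zero]

theorem twistedCentralizer_ne_bot_of_det_eq_zero {A : Matrix m m F} (hA : A.det = 0) (lam : F) :
    twistedCentralizer A lam ≠ ⊥ := by
  obtain ⟨v, hv, hAv⟩ := exists_mulVec_eq_zero_iff.mpr hA
  obtain ⟨w, hw, hwA⟩ := exists_vecMul_eq_zero_iff.mpr hA
  refine (Submodule.ne_bot_iff _).mpr ⟨vecMulVec v w, ?_, vecMulVec_ne_zero hv hw⟩
  rw [mem_twistedCentralizer_iff, mul_vecMulVec, vecMulVec_mul, hAv, hwA]
  simp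

theorem card_GL_eq_card_det_ne_zero :
    Nat.card (GL m F) = Nat.card {A : Matrix m m F // A.det ≠ 0} :=
  Nat.card_congr <| (Equiv.ofInjective _ Units.val_injective).trans <|
    Equiv.subtypeEquivRight fun A => (isUnit_iff_isUnit_det A).trans isUnit_iff_ne_zero

end

theorem card_GL_add_pow_le {F : Type*} [Field F] [Fintype F] {n : ℕ} (hn : 1 ≤ n) :
    Nat.card (GL (Fin n) F) + Fintype.card F ^ (n ^ 2 - 1) ≤ Fintype.card F ^ (n ^ 2) := by
  set q := Fintype.card F
  obtain ⟨m, rfl⟩ : ∃ m, n = m + 1 := ⟨n - 1, by omega⟩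
  have hq : q ^ m ≤ q ^ (m + 1) := Nat.pow_le_pow_right Fintype.card_pos m.le_succ
  have hprod : ∏ i : Fin m, (q ^ (m + 1) - q ^ (i : ℕ)) ≤ q ^ ((m + 1) * m) := by
    calc _ ≤ ∏ _i : Fin m, q ^ (m + 1) := Finset.prod_le_prod' fun _ _ => Nat.sub_le _ _
      _ = _ := by rw [Finset.prod_const, Finset.card_univ, Fintype.card_fin, ← pow_mul]
  have hexp : (m + 1) ^ 2 - 1 = (m + 1) * m + m := by
    rw [sq, Nat.mul_succ]; omega
  calc Nat.card (GL (Fin (m + 1)) F) + q ^ ((m + 1) ^ 2 - 1)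
      ≤ q ^ ((m + 1) * m) * (q ^ (m + 1) - q ^ m) + q ^ ((m + 1) * m) * q ^ m := by
        rw [card_GL_field, Fin.prod_univ_castSucc, Fin.val_last, hexp, pow_add q _ m]
        simp only [Fin.val_castSucc]
        exact Nat.add_le_add_right (Nat.mul_le_mul_right _ hprod) _
    _ = q ^ ((m + 1) ^ 2) := by
        rw [← mul_add, Nat.sub_add_cancel hq, ← pow_add, sq, Nat.mul_succ]

theorem pow_le_card_det_eq_zero {F : Type*} [Field F] [Fintype F] {n : ℕ} (hn : 1 ≤ n) :
    Fintype.card F ^ (n ^ 2 - 1) ≤ Nat.card {A : Matrix (Fin n) (Fin n) F // A.det = 0} := by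
  classical
  have hsplit := Nat.card_congr (Equiv.sumCompl fun A : Matrix (Fin n) (Fin n) F => A.det = 0)
  rw [Nat.card_sum, ← card_GL_eq_card_det_ne_zero] at hsplit
  have hcard : Nat.card (Matrix (Fin n) (Fin n) F) = Fintype.card F ^ (n ^ 2) := by
    simp [Matrix, sq, pow_mul]
  have hGL := card_GL_add_pow_le (F := F) hn
  omega

theorem card_twistedCentralizer_ne_bot {F : Type*} [Field F] [Fintype F] {n : ℕ}
    (hn : 1 ≤ n) (lam : F) :
    Fintype.card F ^ (n ^ 2 - 1) ≤
      Nat.card {A : Matrix (Fin n) (Fin n) F // twistedCentralizer A lam ≠ ⊥} :=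
  (pow_le_card_det_eq_zero hn).trans <| Nat.card_le_card_of_injective
    (Subtype.impEmbedding _ _ fun _ hA => twistedCentralizer_ne_bot_of_det_eq_zero hA lam)
    (Subtype.impEmbedding _ _ _).injective
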